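/- Let A be a Boolean algebra, B ≤ A a subalgebra, M an ideal of B, and N an ideal of A with N ∩ B ⊆ M. Then there is an ideal N' of A with N ⊆ N' and N' ∩ B = M; moreover, if M is a maximal ideal of B, then N' can be chosen to be a maximal ideal of A. -/

import Mathlib

variable {α : Type*}

/-- `B` is a Boolean subalgebra (as a subset) of the Boolean algebra `α`. -/
structure IsBooleanSubalgebra [BooleanAlgebra α] (B : Set α) : Prop where
  bot_mem : ⊥ ∈ B
  top_mem : ⊤ ∈ B
  sup_mem : ∀ {x y}, x ∈ B → y ∈ B → x ⊔ y ∈ B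
  inf_mem : ∀ {x y}, x ∈ B → y ∈ B → x ⊓ y ∈ B
  compl_mem : ∀ {x}, x ∈ B → xᶜ ∈ B

/-- `M` is an ideal of the subalgebra (subset) `B`: nonempty, downward closed
within `B`, and closed under joins. -/
structure IsIdealOn [BooleanAlgebra α] (B M : Set α) : Prop where
  subset : M ⊆ B
  nonempty : M.Nonempty
  lower : ∀ {x y}, y ∈ M → x ∈ B → x ≤ y → x ∈ M
  sup_mem : ∀ {x y}, x ∈ M → y ∈ M → x ⊔ y ∈ M

/-- The ideal of the whole algebra `α` generated by a subset `X`. -/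
def idealGen [BooleanAlgebra α] (X : Set α) : Set α :=
  ⋂₀ {I | IsIdealOn Set.univ I ∧ X ⊆ I}

/-- `M` is a maximal ideal of the subalgebra `B`: a proper ideal of `B` such that
any ideal of `B` strictly containing it is all of `B`. -/
def IsMaximalIdealOn [BooleanAlgebra α] (B M : Set α) : Prop :=
  IsIdealOn B M ∧ M ≠ B ∧ ∀ M', IsIdealOn B M' → M ⊂ M' → M' = B

/-!
The ideal `N ∨ M = {x | x ≤ n ⊔ m, n ∈ N, m ∈ M}` of `α` meets `B` exactly in `M`: if `b ∈ B` and
`b ≤ n ⊔ m`, then `b ⊓ mᶜ ≤ n` lies in `N ∩ B ⊆ M`, so `b ≤ (b ⊓ mᶜ) ⊔ m ∈ M`. By Zorn, enlarge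
it to an ideal `K` maximal among those meeting `B` in `M`. If `M` is maximal in `B`, then `K` is
maximal: any larger ideal `J` meets `B` in an ideal strictly above `M`, hence in all of `B`, so
`⊤ ∈ J`.
-/

open Set

section

variable [BooleanAlgebra α]

namespace IsIdealOn

variable {A B I M : Set α}

theorem eq_of_top_mem (hI : IsIdealOn A I) (htop : ⊤ ∈ I) : I = A :=
  hI.subset.antisymm fun _ hx => hI.lower htop hx le_top

theorem top_notMem_of_ne (hI : IsIdealOn A I) (hne : I ≠ A) : ⊤ ∉ I :=
  fun htop => hne (hI.eq_of_top_mem htop)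

theorem inter_subalgebra (hI : IsIdealOn univ I) (hB : IsBooleanSubalgebra B) :
    IsIdealOn B (I ∩ B) where
  subset := inter_subset_right
  nonempty :=
    let ⟨_, hx⟩ := hI.nonempty
    ⟨⊥, hI.lower hx trivial bot_le, hB.bot_mem⟩
  lower := fun ⟨hyI, _⟩ hxB hxy => ⟨hI.lower hyI trivial hxy, hxB⟩
  sup_mem := fun ⟨hxI, hxB⟩ ⟨hyI, hyB⟩ => ⟨hI.sup_mem hxI hyI, hB.sup_mem hxB hyB⟩

theorem sUnion_of_isChain {c : Set (Set α)} (hc : IsChain (· ⊆ ·) c) (hne : c.Nonempty)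
    (hideal : ∀ I ∈ c, IsIdealOn A I) : IsIdealOn A (⋃₀ c) where
  subset := sUnion_subset fun I hI => (hideal I hI).subset
  nonempty :=
    let ⟨I, hI⟩ := hne
    let ⟨x, hx⟩ := (hideal I hI).nonempty
    ⟨x, I, hI, hx⟩
  lower := fun ⟨I, hI, hyI⟩ hxA hxy => ⟨I, hI, (hideal I hI).lower hyI hxA hxy⟩
  sup_mem := by
    rintro x y ⟨I, hI, hxI⟩ ⟨J, hJ, hyJ⟩
    rcases hc.total hI hJ with hIJ | hJI
    · exact ⟨J, hJ, (hideal J hJ).sup_mem (hIJ hxI) hyJ⟩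
    · exact ⟨I, hI, (hideal I hI).sup_mem hxI (hJI hyJ)⟩

end IsIdealOn

def joinIdeal (N M : Set α) : Set α :=
  {x | ∃ n ∈ N, ∃ m ∈ M, x ≤ n ⊔ m}

section joinIdeal

variable {B M N : Set α}

theorem isIdealOn_joinIdeal (hN : IsIdealOn univ N) (hM : IsIdealOn B M) :
    IsIdealOn univ (joinIdeal N M) where
  subset := subset_univ _
  nonempty :=
    let ⟨n, hn⟩ := hN.nonempty
    let ⟨m, hm⟩ := hM.nonempty
    ⟨n ⊔ m, n, hn, m, hm, le_rfl⟩
  lower := fun ⟨n, hn, m, hm, hy⟩ _ hxy => ⟨n, hn, m, hm, hxy.trans hy⟩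
  sup_mem := by
    rintro x y ⟨n, hn, m, hm, hx⟩ ⟨n', hn', m', hm', hy⟩
    refine ⟨n ⊔ n', hN.sup_mem hn hn', m ⊔ m', hM.sup_mem hm hm', ?_⟩
    calc x ⊔ y ≤ (n ⊔ m) ⊔ (n' ⊔ m') := sup_le_sup hx hy
      _ = (n ⊔ n') ⊔ (m ⊔ m') := sup_sup_sup_comm n m n' m'

theorem subset_joinIdeal_left (hM : M.Nonempty) : N ⊆ joinIdeal N M :=
  let ⟨m, hm⟩ := hM
  fun x hx => ⟨x, hx, m, hm, le_sup_left⟩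

theorem subset_joinIdeal_right (hN : N.Nonempty) : M ⊆ joinIdeal N M :=
  let ⟨n, hn⟩ := hN
  fun x hx => ⟨n, hn, x, hx, le_sup_right⟩

theorem mem_of_le_sup (hB : IsBooleanSubalgebra B) (hM : IsIdealOn B M)
    (hN : IsIdealOn univ N) (hNB : N ∩ B ⊆ M) {b n m : α} (hb : b ∈ B) (hn : n ∈ N)
    (hm : m ∈ M) (hbnm : b ≤ n ⊔ m) : b ∈ M := by
  have hdiff_N : b ⊓ mᶜ ∈ N := by
    refine hN.lower hn trivial ?_
    calc b ⊓ mᶜ ≤ (n ⊔ m) ⊓ mᶜ := inf_le_inf_right _ hbnm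
      _ = n ⊓ mᶜ := by rw [inf_sup_right, inf_compl_self, sup_bot_eq]
      _ ≤ n := inf_le_left
  have hdiff_M : b ⊓ mᶜ ∈ M :=
    hNB ⟨hdiff_N, hB.inf_mem hb (hB.compl_mem (hM.subset hm))⟩
  refine hM.lower (hM.sup_mem hdiff_M hm) hb ?_
  calc b = (b ⊓ mᶜ) ⊔ (b ⊓ m) := by rw [← inf_sup_left, compl_sup_eq_top, inf_top_eq]
    _ ≤ (b ⊓ mᶜ) ⊔ m := sup_le_sup_left inf_le_right _

theorem joinIdeal_inter_eq (hB : IsBooleanSubalgebra B) (hM : IsIdealOn B M)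
    (hN : IsIdealOn univ N) (hNB : N ∩ B ⊆ M) : joinIdeal N M ∩ B = M := by
  refine Subset.antisymm ?_ fun m hm => ⟨subset_joinIdeal_right hN.nonempty hm, hM.subset hm⟩
  rintro b ⟨⟨n, hn, m, hm, hbnm⟩, hb⟩
  exact mem_of_le_sup hB hM hN hNB hb hn hm hbnm

end joinIdeal

section maximal

variable {B M : Set α}

theorem exists_maximal_ideal_inter_eq {I : Set α} (hI : IsIdealOn univ I) (hIB : I ∩ B = M) :
    ∃ K, I ⊆ K ∧ Maximal (fun K => IsIdealOn univ K ∧ K ∩ B = M) K := by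
  refine zorn_subset_nonempty _ ?_ I ⟨hI, hIB⟩
  rintro c hcS hc ⟨I₀, hI₀⟩
  refine ⟨⋃₀ c, ⟨IsIdealOn.sUnion_of_isChain hc ⟨I₀, hI₀⟩ fun J hJ => (hcS hJ).1, ?_⟩,
    fun _ => subset_sUnion_of_mem⟩
  refine Subset.antisymm ?_ ((hcS hI₀).2 ▸ inter_subset_inter_left B (subset_sUnion_of_mem hI₀))
  rintro x ⟨⟨J, hJ, hxJ⟩, hxB⟩
  exact (hcS hJ).2 ▸ ⟨hxJ, hxB⟩

theorem isMaximalIdealOn_of_maximal (hB : IsBooleanSubalgebra B) (hM : IsMaximalIdealOn B M)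
    {K : Set α} (hK : Maximal (fun K => IsIdealOn univ K ∧ K ∩ B = M) K) :
    IsMaximalIdealOn univ K := by
  obtain ⟨⟨hKideal, hKB⟩, hKmax⟩ := hK
  obtain ⟨hMideal, hMne, hMmax⟩ := hM
  refine ⟨hKideal, fun hKuniv => hMideal.top_notMem_of_ne hMne ?_, fun J hJ hKJ => ?_⟩
  · rw [← hKB, hKuniv]
    exact ⟨trivial, hB.top_mem⟩
  have hMJB : M ⊆ J ∩ B := hKB ▸ inter_subset_inter_left B hKJ.1
  have hJB_ne : J ∩ B ≠ M := fun hJB => hKJ.2 (hKmax ⟨hJ, hJB⟩ hKJ.1)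
  have hJB : J ∩ B = B :=
    hMmax _ (hJ.inter_subalgebra hB) (ssubset_of_subset_of_ne hMJB hJB_ne.symm)
  have htop : ⊤ ∈ J ∩ B := by rw [hJB]; exact hB.top_mem
  exact hJ.eq_of_top_mem htop.1

end maximal

end

/-- Given an ideal `M` of a subalgebra `B` and an ideal `N` of `α`
with `N ∩ B ⊆ M`, there is an ideal `N'` of `α` with `N ⊆ N'` and `N' ∩ B = M`;
moreover if `M` is maximal in `B` then `N'` can be chosen maximal in `α`. -/
theorem ideal_extension [BooleanAlgebra α] (B : Set α)
    (hB : IsBooleanSubalgebra B) (M : Set α) (hM : IsIdealOn B M)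
    (N : Set α) (hN : IsIdealOn Set.univ N) (hNB : N ∩ B ⊆ M) :
    (∃ N', IsIdealOn Set.univ N' ∧ N ⊆ N' ∧ N' ∩ B = M) ∧
    (IsMaximalIdealOn B M →
      ∃ N', IsMaximalIdealOn Set.univ N' ∧ N ⊆ N' ∧ N' ∩ B = M) := by
  have hjoin := isIdealOn_joinIdeal hN hM
  have hNjoin : N ⊆ joinIdeal N M := subset_joinIdeal_left hM.nonempty
  have hjoinB := joinIdeal_inter_eq hB hM hN hNB
  refine ⟨⟨joinIdeal N M, hjoin, hNjoin, hjoinB⟩, fun hMmax => ?_⟩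
  obtain ⟨K, hjoinK, hK⟩ := exists_maximal_ideal_inter_eq hjoin hjoinB
  exact ⟨K, isMaximalIdealOn_of_maximal hB hMmax hK, hNjoin.trans hjoinK, hK.1.2⟩
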